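/- With 𝔤_− = (U⊗Q) ⊕ Sym²U as above and 𝔤₀ the image of 𝔤𝔩(U) ⊕ 𝔰𝔭_ω(Q) acting naturally on 𝔤_−, the first prolongation 𝔤₁ = {φ ∈ Hom(𝔤_{−2}, 𝔤_{−1}) ⊕ Hom(𝔤_{−1}, 𝔤₀) : φ([v₁,v₂]) = φ(v₁)·v₂ − φ(v₂)·v₁ for all v₁,v₂ ∈ 𝔤_−} is isomorphic as a 𝔤₀-module to Hom(U, Q), where h ∈ Hom(U,Q) acts by h·(v⊙w) = (1/2)(w⊗h(v) + v⊗h(w)) and h·(w⊗p) = h^U_{w⊗p} + h^Q_{w⊗p}, with h^U_{w⊗p}(u) = (1/2)ω(h(u),p)w and h^Q_{w⊗p}(q) = (1/2)ω(h(w),q)p + (1/2)ω(p,q)h(w). -/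

import Mathlib

open scoped TensorProduct

noncomputable section

variable (U : Type*) [AddCommGroup U] [Module ℂ U]
variable (Q : Type*) [AddCommGroup Q] [Module ℂ Q]

/-- Relations defining `Sym² U` as a quotient of `U ⊗ U`. -/
def symRel : Submodule ℂ (U ⊗[ℂ] U) :=
  Submodule.span ℂ {x | ∃ u v : U, x = u ⊗ₜ[ℂ] v - v ⊗ₜ[ℂ] u}

/-- The symmetric square `Sym² U`. -/
def SymSq := (U ⊗[ℂ] U) ⧸ symRel U

instance : AddCommGroup (SymSq U) := by unfold SymSq; infer_instance
instance : Module ℂ (SymSq U) := by unfold SymSq; infer_instance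

/-- The symmetric product `u ⊙ v ∈ Sym² U`. -/
def symPr (u v : U) : SymSq U := Submodule.Quotient.mk (u ⊗ₜ[ℂ] v)

variable (ω : Q →ₗ[ℂ] Q →ₗ[ℂ] ℂ)
variable (B : (U ⊗[ℂ] Q) →ₗ[ℂ] (U ⊗[ℂ] Q) →ₗ[ℂ] SymSq U)

/-- A pair `(φ₂ : 𝔤₋₂ → 𝔤₋₁, φ₁ : 𝔤₋₁ → 𝔤₀)`, where
`𝔤₀ = 𝔤𝔩(U) ⊕ 𝔰𝔭_ω(Q)` is represented by pairs of endomorphisms, belongs to the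
first Tanaka prolongation `𝔤₁` of `(𝔤₀, 𝔤₋)`: the second component of `φ₁`
lands in `𝔰𝔭_ω(Q)`, and `φ([v₁,v₂]) = φ(v₁)·v₂ − φ(v₂)·v₁` holds for all
`v₁, v₂ ∈ 𝔤₋` (checked on the elementary tensors spanning `𝔤₋₁` and the
symmetric products spanning `𝔤₋₂`). -/
def InProlong₁ (φ₂ : SymSq U →ₗ[ℂ] (U ⊗[ℂ] Q))
    (φ₁ : (U ⊗[ℂ] Q) →ₗ[ℂ] (Module.End ℂ U × Module.End ℂ Q)) : Prop :=
  (∀ (x : U ⊗[ℂ] Q) (q₁ q₂ : Q), ω ((φ₁ x).2 q₁) q₂ = ω ((φ₁ x).2 q₂) q₁) ∧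
  (∀ (u : U) (p : Q) (w₁ w₂ : U),
    symPr U ((φ₁ (u ⊗ₜ[ℂ] p)).1 w₁) w₂ + symPr U w₁ ((φ₁ (u ⊗ₜ[ℂ] p)).1 w₂)
      = B (φ₂ (symPr U w₁ w₂)) (u ⊗ₜ[ℂ] p)) ∧
  (∀ (w₁ : U) (q₁ : Q) (w₂ : U) (q₂ : Q),
    ((φ₁ (w₁ ⊗ₜ[ℂ] q₁)).1 w₂) ⊗ₜ[ℂ] q₂ + w₂ ⊗ₜ[ℂ] ((φ₁ (w₁ ⊗ₜ[ℂ] q₁)).2 q₂)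
        - ((φ₁ (w₂ ⊗ₜ[ℂ] q₂)).1 w₁) ⊗ₜ[ℂ] q₁ - w₁ ⊗ₜ[ℂ] ((φ₁ (w₂ ⊗ₜ[ℂ] q₂)).2 q₁)
      = φ₂ (ω q₁ q₂ • symPr U w₁ w₂))

/-- The pair `(φ₂, φ₁)` is the image of `h ∈ Hom(U,Q)` under the map
`π₁ : Hom(U,Q) → 𝔤₁` given by `h·(v⊙w) = ½(w⊗h(v) + v⊗h(w))` and
`h·(w⊗p) = h^U_{w⊗p} + h^Q_{w⊗p}` with `h^U_{w⊗p}(u) = ½ω(h(u),p)w` and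
`h^Q_{w⊗p}(q) = ½ω(h(w),q)p + ½ω(p,q)h(w)`. -/
def IsPi₁ (h : U →ₗ[ℂ] Q) (φ₂ : SymSq U →ₗ[ℂ] (U ⊗[ℂ] Q))
    (φ₁ : (U ⊗[ℂ] Q) →ₗ[ℂ] (Module.End ℂ U × Module.End ℂ Q)) : Prop :=
  (∀ v w : U, φ₂ (symPr U v w)
      = (2⁻¹ : ℂ) • (w ⊗ₜ[ℂ] h v + v ⊗ₜ[ℂ] h w)) ∧
  (∀ (w : U) (p : Q) (u : U),
      (φ₁ (w ⊗ₜ[ℂ] p)).1 u = (2⁻¹ * ω (h u) p) • w) ∧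
  (∀ (w : U) (p : Q) (q : Q),
      (φ₁ (w ⊗ₜ[ℂ] p)).2 q
        = (2⁻¹ : ℂ) • (ω (h w) q • p + ω p q • h w))

-- Auxiliary lemmas

lemma symPr_comm (x y : U) : symPr U x y = symPr U y x := by
  unfold symPr
  exact (Submodule.Quotient.eq _).mpr (Submodule.subset_span ⟨x, y, rfl⟩)

@[simp] lemma symPr_add_left (x y z : U) :
    symPr U (x + y) z = symPr U x z + symPr U y z := by
  unfold symPr; rw [TensorProduct.add_tmul]; exact Submodule.Quotient.mk_add _

@[simp] lemma symPr_add_right (x y z : U) :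
    symPr U x (y + z) = symPr U x y + symPr U x z := by
  unfold symPr; rw [TensorProduct.tmul_add]; exact Submodule.Quotient.mk_add _

@[simp] lemma symPr_smul_left (c : ℂ) (x z : U) :
    symPr U (c • x) z = c • symPr U x z := by
  unfold symPr; rw [← TensorProduct.smul_tmul']; exact Submodule.Quotient.mk_smul _ _ _

@[simp] lemma symPr_smul_right (c : ℂ) (x z : U) :
    symPr U x (c • z) = c • symPr U x z := by
  unfold symPr; rw [TensorProduct.tmul_smul]; exact Submodule.Quotient.mk_smul _ _ _

@[simp] lemma symPr_zero_left (z : U) : symPr U 0 z = 0 := by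
  unfold symPr; rw [TensorProduct.zero_tmul, Submodule.Quotient.mk_zero]; rfl

@[simp] lemma symPr_zero_right (z : U) : symPr U z 0 = 0 := by
  unfold symPr; rw [TensorProduct.tmul_zero, Submodule.Quotient.mk_zero]; rfl

/-- contraction in the left factor by a dual vector -/
def contrL (ξ : Module.Dual ℂ U) : (U ⊗[ℂ] Q) →ₗ[ℂ] Q :=
  TensorProduct.lift ((LinearMap.lsmul ℂ Q).comp ξ)

@[simp] lemma contrL_tmul (ξ : Module.Dual ℂ U) (w : U) (q : Q) :
    contrL U Q ξ (w ⊗ₜ[ℂ] q) = ξ w • q := by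
  simp [contrL]

/-- contraction in the right factor by `ω (·, p)` -/
def contrR (p : Q) : (U ⊗[ℂ] Q) →ₗ[ℂ] U :=
  TensorProduct.lift (((LinearMap.lsmul ℂ U).comp (ω.flip p)).flip)

@[simp] lemma contrR_tmul (p : Q) (w : U) (q : Q) :
    contrR U Q ω p (w ⊗ₜ[ℂ] q) = ω q p • w := by
  simp [contrR]

/-- evaluation of a symmetric square against a dual vector -/
def evSym (η : Module.Dual ℂ U) : SymSq U →ₗ[ℂ] ℂ :=
  Submodule.liftQ (symRel U)
    (TensorProduct.lift (LinearMap.mk₂ ℂ (fun x y => η x * η y)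
      (by intros; simp [add_mul]) (by intros; simp [mul_assoc])
      (by intros; simp [mul_add]) (by intros; simp; ring)))
    (by
      rw [symRel, Submodule.span_le]
      rintro x ⟨u, v, rfl⟩
      simp [LinearMap.mem_ker, mul_comm])

@[simp] lemma evSym_symPr (η : Module.Dual ℂ U) (x y : U) :
    evSym U η (symPr U x y) = η x * η y := by
  show ((symRel U).liftQ _ _) (Submodule.Quotient.mk (x ⊗ₜ[ℂ] y)) = η x * η y
  erw [Submodule.liftQ_apply]
  simp

lemma exists_dual_pair {u w : U} (h : w ∉ Submodule.span ℂ {u}) :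
    ∃ ξ : Module.Dual ℂ U, ξ u = 0 ∧ ξ w = 1 := by
  set S := Submodule.span ℂ {u} with hS
  have hw : S.mkQ w ≠ 0 := fun h0 => h ((Submodule.Quotient.mk_eq_zero S).mp h0)
  have hnot : ¬ ∀ φ : Module.Dual ℂ (U ⧸ S), φ (S.mkQ w) = 0 := fun hφ =>
    hw ((Module.forall_dual_apply_eq_zero_iff ℂ (S.mkQ w)).mp hφ)
  obtain ⟨f, hf⟩ := not_forall.mp hnot
  refine ⟨(f (S.mkQ w))⁻¹ • (f ∘ₗ S.mkQ), ?_, ?_⟩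
  · have hu : S.mkQ u = 0 := by
      rw [Submodule.mkQ_apply, Submodule.Quotient.mk_eq_zero]
      exact Submodule.mem_span_singleton_self u
    simp [hu]
  · simp only [LinearMap.smul_apply, LinearMap.coe_comp, Function.comp_apply, smul_eq_mul]
    exact inv_mul_cancel₀ hf

lemma exists_dual_one {w : U} (h : w ≠ 0) : ∃ ξ : Module.Dual ℂ U, ξ w = 1 := by
  have : w ∉ Submodule.span ℂ ({0} : Set U) := by
    simpa [Submodule.span_zero_singleton] using h
  obtain ⟨ξ, _, hξ⟩ := exists_dual_pair U this
  exact ⟨ξ, hξ⟩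

lemma exists_notmem_span (hU : 2 ≤ Module.finrank ℂ U) (w : U) :
    ∃ u : U, u ∉ Submodule.span ℂ {w} := by
  have h1 : Submodule.span ℂ ({w} : Set U) < ⊤ := by
    apply span_lt_top_of_card_lt_finrank
    simpa using lt_of_lt_of_le one_lt_two hU
  obtain ⟨u, _, hu⟩ := SetLike.exists_of_lt h1
  exact ⟨u, hu⟩

lemma smul_cancel {u : U} (hu : u ≠ 0) {a b : ℂ} (h : a • u = b • u) : a = b := by
  have h2 : (a - b) • u = 0 := by rw [sub_smul, h, sub_self]
  rcases smul_eq_zero.mp h2 with h3 | h3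
  · exact sub_eq_zero.mp h3
  · exact absurd h3 hu


section Forward

variable {U Q ω B}

/-- the map `π₁(h)` on `𝔤₋₂`. -/
def pi2of (h : U →ₗ[ℂ] Q) : SymSq U →ₗ[ℂ] (U ⊗[ℂ] Q) :=
  Submodule.liftQ (symRel U)
    ((2⁻¹ : ℂ) • (TensorProduct.map LinearMap.id h ∘ₗ (TensorProduct.comm ℂ U U).toLinearMap
      + TensorProduct.map LinearMap.id h))
    (by
      rw [symRel, Submodule.span_le]
      rintro x ⟨u, v, rfl⟩
      simp only [SetLike.mem_coe, LinearMap.mem_ker, map_sub, LinearMap.smul_apply,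
        LinearMap.add_apply, LinearMap.coe_comp, Function.comp_apply,
        LinearEquiv.coe_coe, TensorProduct.comm_tmul, TensorProduct.map_tmul,
        LinearMap.id_coe, id_eq]
      rw [add_comm]
      simp [sub_self])

lemma pi2of_symPr (h : U →ₗ[ℂ] Q) (v w : U) :
    pi2of h (symPr U v w) = (2⁻¹ : ℂ) • (w ⊗ₜ[ℂ] h v + v ⊗ₜ[ℂ] h w) := by
  show ((symRel U).liftQ _ _) (Submodule.Quotient.mk (v ⊗ₜ[ℂ] w)) = _
  erw [Submodule.liftQ_apply]
  simp

/-- the `𝔤𝔩(U)`-component of `π₁(h)` applied to `w ⊗ p`. -/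
def AhOf (ω : Q →ₗ[ℂ] Q →ₗ[ℂ] ℂ) (h : U →ₗ[ℂ] Q) (w : U) (p : Q) : Module.End ℂ U :=
  LinearMap.smulRight ((2⁻¹ : ℂ) • (ω.flip p ∘ₗ h)) w

/-- the `𝔰𝔭(Q)`-component of `π₁(h)` applied to `w ⊗ p`. -/
def ChOf (ω : Q →ₗ[ℂ] Q →ₗ[ℂ] ℂ) (h : U →ₗ[ℂ] Q) (w : U) (p : Q) : Module.End ℂ Q :=
  LinearMap.smulRight ((2⁻¹ : ℂ) • (ω (h w))) p + LinearMap.smulRight ((2⁻¹ : ℂ) • (ω p)) (h w)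

@[simp] lemma AhOf_apply (ω : Q →ₗ[ℂ] Q →ₗ[ℂ] ℂ) (h : U →ₗ[ℂ] Q) (w : U) (p : Q) (u : U) :
    AhOf ω h w p u = (2⁻¹ * ω (h u) p) • w := by
  simp [AhOf]

@[simp] lemma ChOf_apply (ω : Q →ₗ[ℂ] Q →ₗ[ℂ] ℂ) (h : U →ₗ[ℂ] Q) (w : U) (p : Q) (q : Q) :
    ChOf ω h w p q = (2⁻¹ * ω (h w) q) • p + (2⁻¹ * ω p q) • h w := by
  simp [ChOf]

def pi1of (ω : Q →ₗ[ℂ] Q →ₗ[ℂ] ℂ) (h : U →ₗ[ℂ] Q) :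
    (U ⊗[ℂ] Q) →ₗ[ℂ] (Module.End ℂ U × Module.End ℂ Q) :=
  TensorProduct.lift (LinearMap.mk₂ ℂ (fun w p => (AhOf ω h w p, ChOf ω h w p))
    (by
      intro w w' p
      simp only [Prod.mk_add_mk, Prod.mk.injEq]
      constructor
      · ext u; simp only [AhOf_apply, LinearMap.add_apply]; module
      · ext q; simp only [ChOf_apply, LinearMap.add_apply, map_add, LinearMap.add_apply]; module)
    (by
      intro c w p
      simp only [Prod.smul_mk, Prod.mk.injEq]
      constructor
      · ext u; simp only [AhOf_apply, LinearMap.smul_apply]; module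
      · ext q; simp only [ChOf_apply, LinearMap.smul_apply, map_smul, LinearMap.smul_apply,
          smul_eq_mul]; module)
    (by
      intro w p p'
      simp only [Prod.mk_add_mk, Prod.mk.injEq]
      constructor
      · ext u; simp only [AhOf_apply, LinearMap.add_apply, map_add]; module
      · ext q; simp only [ChOf_apply, LinearMap.add_apply, map_add, LinearMap.add_apply]; module)
    (by
      intro c w p
      simp only [Prod.smul_mk, Prod.mk.injEq]
      constructor
      · ext u; simp only [AhOf_apply, LinearMap.smul_apply, map_smul, smul_eq_mul]; module
      · ext q; simp only [ChOf_apply, LinearMap.smul_apply, map_smul, LinearMap.smul_apply,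
          smul_eq_mul]; module))

@[simp] lemma pi1of_tmul (ω : Q →ₗ[ℂ] Q →ₗ[ℂ] ℂ) (h : U →ₗ[ℂ] Q) (w : U) (p : Q) :
    pi1of ω h (w ⊗ₜ[ℂ] p) = (AhOf ω h w p, ChOf ω h w p) := by
  simp [pi1of]

end Forward

lemma omega_anti (halt : ∀ q : Q, ω q q = 0) (p q : Q) : ω q p = - ω p q := by
  have h := halt (p + q)
  simp only [map_add, LinearMap.add_apply, halt] at h
  linear_combination h

lemma main_forward (halt : ∀ q : Q, ω q q = 0)
    (hB : ∀ (u₁ u₂ : U) (q₁ q₂ : Q),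
      B (u₁ ⊗ₜ[ℂ] q₁) (u₂ ⊗ₜ[ℂ] q₂) = ω q₁ q₂ • symPr U u₁ u₂)
    (h : U →ₗ[ℂ] Q) :
    InProlong₁ U Q ω B (pi2of h) (pi1of ω h) ∧ IsPi₁ U Q ω h (pi2of h) (pi1of ω h) := by
  constructor
  · refine ⟨?_, ?_, ?_⟩
    · intro x q₁ q₂
      induction x using TensorProduct.induction_on with
      | zero => simp only [map_zero, Prod.snd_zero, LinearMap.zero_apply]
      | tmul w p =>
        simp only [pi1of_tmul, ChOf_apply, map_add, map_smul, LinearMap.add_apply,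
          LinearMap.smul_apply, smul_eq_mul]
        ring
      | add x y hx hy =>
        simp only [map_add, Prod.snd_add, LinearMap.add_apply]
        linear_combination hx + hy
    · intro u p w₁ w₂
      simp only [pi1of_tmul, AhOf_apply, pi2of_symPr, symPr_smul_left, symPr_smul_right,
        map_add, map_smul, LinearMap.add_apply, LinearMap.smul_apply, hB]
      rw [symPr_comm U w₂ u]
      module
    · intro w₁ q₁ w₂ q₂
      simp only [pi1of_tmul, AhOf_apply, ChOf_apply, map_smul, pi2of_symPr]
      rw [show ω q₂ q₁ = - ω q₁ q₂ from omega_anti Q ω halt q₁ q₂]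
      simp only [TensorProduct.tmul_add, TensorProduct.tmul_smul,
        ← TensorProduct.smul_tmul']
      module
  · refine ⟨fun v w => pi2of_symPr h v w, ?_, ?_⟩
    · intro w p u
      simp
    · intro w p q
      simp only [pi1of_tmul, ChOf_apply, smul_add, smul_smul]

section Converse

lemma B_right
    (hB : ∀ (u₁ u₂ : U) (q₁ q₂ : Q),
      B (u₁ ⊗ₜ[ℂ] q₁) (u₂ ⊗ₜ[ℂ] q₂) = ω q₁ q₂ • symPr U u₁ u₂)
    (t : U ⊗[ℂ] Q) (u : U) (p : Q) :
    B t (u ⊗ₜ[ℂ] p) = symPr U (contrR U Q ω p t) u := by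
  induction t using TensorProduct.induction_on with
  | zero => simp
  | tmul a r => simp [hB]
  | add x y hx hy => simp [map_add, LinearMap.add_apply, hx, hy]

lemma step_A1
    (hB : ∀ (u₁ u₂ : U) (q₁ q₂ : Q),
      B (u₁ ⊗ₜ[ℂ] q₁) (u₂ ⊗ₜ[ℂ] q₂) = ω q₁ q₂ • symPr U u₁ u₂)
    (φ₂ : SymSq U →ₗ[ℂ] (U ⊗[ℂ] Q))
    (φ₁ : (U ⊗[ℂ] Q) →ₗ[ℂ] (Module.End ℂ U × Module.End ℂ Q))
    (hii : ∀ (u : U) (p : Q) (w₁ w₂ : U),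
      symPr U ((φ₁ (u ⊗ₜ[ℂ] p)).1 w₁) w₂ + symPr U w₁ ((φ₁ (u ⊗ₜ[ℂ] p)).1 w₂)
        = B (φ₂ (symPr U w₁ w₂)) (u ⊗ₜ[ℂ] p))
    (u : U) (p : Q) (w : U) :
    (φ₁ (u ⊗ₜ[ℂ] p)).1 w ∈ Submodule.span ℂ {u} := by
  have core : ∀ (v : U) (η : Module.Dual ℂ U), η u = 0 → η v = 1 →
      η ((φ₁ (u ⊗ₜ[ℂ] p)).1 v) = 0 := by
    intro v η hηu hηv
    have h2 := hii u p v v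
    rw [B_right U Q ω B hB] at h2
    have h3 := congrArg (evSym U η) h2
    simp only [map_add, evSym_symPr, hηu, hηv, mul_one, one_mul, mul_zero] at h3
    linear_combination h3 / 2
  by_contra hmem
  obtain ⟨ξ, hξu, hξx⟩ := exists_dual_pair U hmem
  suffices hz : ∀ w' : U, ξ ((φ₁ (u ⊗ₜ[ℂ] p)).1 w') = 0 by
    rw [hz w] at hξx
    exact one_ne_zero hξx.symm
  intro w'
  by_cases hw' : ξ w' = 0
  · by_cases hξ0 : ξ = 0
    · simp [hξ0]
    · obtain ⟨v, hv⟩ : ∃ v, ξ v ≠ 0 := by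
        by_contra hc
        push_neg at hc
        exact hξ0 (by ext x; simp [hc])
      have e1 := core (w' + v) ((ξ v)⁻¹ • ξ)
        (by simp [hξu]) (by simp [hw', inv_mul_cancel₀ hv])
      have e2 := core v ((ξ v)⁻¹ • ξ)
        (by simp [hξu]) (by simp [inv_mul_cancel₀ hv])
      rw [map_add, map_add] at e1
      simp only [LinearMap.smul_apply, smul_eq_mul] at e1 e2
      have e3 : (ξ v)⁻¹ * ξ ((φ₁ (u ⊗ₜ[ℂ] p)).1 w') = 0 := by linear_combination e1 - e2
      exact (mul_eq_zero.mp e3).resolve_left (inv_ne_zero hv)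
  · have e1 := core w' ((ξ w')⁻¹ • ξ) (by simp [hξu]) (by simp [inv_mul_cancel₀ hw'])
    simp only [LinearMap.smul_apply, smul_eq_mul] at e1
    exact (mul_eq_zero.mp e1).resolve_left (inv_ne_zero hw')

end Converse

lemma main_converse
    (hU : 2 ≤ Module.finrank ℂ U)
    (halt : ∀ q : Q, ω q q = 0) (hne : ω ≠ 0)
    (hB : ∀ (u₁ u₂ : U) (q₁ q₂ : Q),
      B (u₁ ⊗ₜ[ℂ] q₁) (u₂ ⊗ₜ[ℂ] q₂) = ω q₁ q₂ • symPr U u₁ u₂)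
    (φ₂ : SymSq U →ₗ[ℂ] (U ⊗[ℂ] Q))
    (φ₁ : (U ⊗[ℂ] Q) →ₗ[ℂ] (Module.End ℂ U × Module.End ℂ Q))
    (hP : InProlong₁ U Q ω B φ₂ φ₁) :
    ∃ h : U →ₗ[ℂ] Q, IsPi₁ U Q ω h φ₂ φ₁ := by
  obtain ⟨hsp, hii, hiii⟩ := hP
  have hanti : ∀ p q : Q, ω q p = - ω p q := omega_anti Q ω halt
  -- a normalized pair for ω
  have hex : ∃ p q, ω p q ≠ 0 := by
    by_contra hc
    push_neg at hc
    exact hne (by ext p q; simp [hc p q])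
  obtain ⟨p₀, q₀', hpq⟩ := hex
  set q₀ : Q := (ω p₀ q₀')⁻¹ • q₀' with hq₀
  have hω₀ : ω p₀ q₀ = 1 := by
    rw [hq₀, map_smul, smul_eq_mul]
    exact inv_mul_cancel₀ hpq
  clear_value q₀
  -- a reference vector and covector in U
  obtain ⟨u₀, hu₀span⟩ := exists_notmem_span U hU 0
  have hu₀ : u₀ ≠ 0 := fun h0 => hu₀span (by rw [h0]; exact Submodule.zero_mem _)
  obtain ⟨ξ₀, hξ₀⟩ := exists_dual_one U hu₀
  -- the scalar function σ
  set σ : Q → U → ℂ := fun p w => ξ₀ ((φ₁ (u₀ ⊗ₜ[ℂ] p)).1 w) with hσdef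
  have hσ0w : ∀ p : Q, σ p (0 : U) = 0 := by intro p; simp [hσdef]
  -- structure of the 𝔤𝔩(U)-component
  have hPA : ∀ (u : U) (p : Q) (w : U), (φ₁ (u ⊗ₜ[ℂ] p)).1 w = σ p w • u := by
    intro u p w
    have hσ0 : (φ₁ (u₀ ⊗ₜ[ℂ] p)).1 w = σ p w • u₀ := by
      obtain ⟨c, hc⟩ := Submodule.mem_span_singleton.mp (step_A1 U Q ω B hB φ₂ φ₁ hii u₀ p w)
      rw [← hc]
      congr 1
      simp [hσdef, ← hc, hξ₀]
    by_cases hu : u ∈ Submodule.span ℂ {u₀}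
    · obtain ⟨d, hd⟩ := Submodule.mem_span_singleton.mp hu
      rw [← hd, ← TensorProduct.smul_tmul', map_smul]
      show (d • (φ₁ (u₀ ⊗ₜ[ℂ] p))).1 w = _
      rw [Prod.smul_fst, LinearMap.smul_apply, hσ0, smul_comm]
    · obtain ⟨c, hc⟩ := Submodule.mem_span_singleton.mp (step_A1 U Q ω B hB φ₂ φ₁ hii u p w)
      obtain ⟨e, he⟩ := Submodule.mem_span_singleton.mp (step_A1 U Q ω B hB φ₂ φ₁ hii (u + u₀) p w)
      have hadd : (φ₁ ((u + u₀) ⊗ₜ[ℂ] p)).1 w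
          = (φ₁ (u ⊗ₜ[ℂ] p)).1 w + (φ₁ (u₀ ⊗ₜ[ℂ] p)).1 w := by
        rw [TensorProduct.add_tmul, map_add]; rfl
      rw [hadd, ← hc, hσ0] at he
      have hkey : (e - c) • u = (σ p w - e) • u₀ := by
        rw [sub_smul, sub_smul, sub_eq_sub_iff_add_eq_add, ← smul_add, he]
        exact add_comm _ _
      have hec : e = c := by
        by_contra hne'
        apply hu
        rw [Submodule.mem_span_singleton]
        refine ⟨(e - c)⁻¹ * (σ p w - e), ?_⟩
        rw [mul_smul, ← hkey, smul_smul, inv_mul_cancel₀ (sub_ne_zero.mpr hne'), one_smul]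
      have hce : c = σ p w := by
        rw [hec] at hkey
        have h0 : (σ p w - c) • u₀ = 0 := by rw [← hkey, sub_self, zero_smul]
        rcases smul_eq_zero.mp h0 with h1 | h1
        · exact (sub_eq_zero.mp h1).symm
        · exact absurd h1 hu₀
      rw [← hc, hce]
  -- diagonal structure of the 𝔰𝔭(Q)-component
  have hPC : ∀ (w : U) (q : Q), (φ₁ (w ⊗ₜ[ℂ] q)).2 q = σ q w • q := by
    intro w q
    rcases eq_or_ne w 0 with rfl | hw
    · rw [TensorProduct.zero_tmul, map_zero, hσ0w, zero_smul]
      simp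
    · obtain ⟨w₁, hw₁⟩ := exists_notmem_span U hU w
      obtain ⟨ξ, hξw, hξw₁⟩ := exists_dual_pair U hw₁
      have h2 := hiii w₁ q w q
      rw [halt q, zero_smul, map_zero, hPA w₁ q w, hPA w q w₁] at h2
      have h3 := congrArg (contrL U Q ξ) h2
      simp only [map_add, map_sub, contrL_tmul, map_smul, map_zero, hξw, hξw₁, smul_eq_mul,
        mul_one, mul_zero, zero_smul, one_smul, smul_smul, smul_zero, add_zero, sub_zero] at h3
      rw [sub_eq_zero] at h3
      exact h3.symm
  -- symmetrized structure of the 𝔰𝔭(Q)-component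
  have hF2 : ∀ (w : U) (q₁ q₂ : Q),
      (φ₁ (w ⊗ₜ[ℂ] q₁)).2 q₂ + (φ₁ (w ⊗ₜ[ℂ] q₂)).2 q₁ = σ q₁ w • q₂ + σ q₂ w • q₁ := by
    intro w q₁ q₂
    rcases eq_or_ne w 0 with rfl | hw
    · rw [TensorProduct.zero_tmul, TensorProduct.zero_tmul, map_zero, hσ0w, hσ0w]
      simp
    · obtain ⟨w₁, hw₁⟩ := exists_notmem_span U hU w
      obtain ⟨ξ, hξw, hξw₁⟩ := exists_dual_pair U hw₁
      have e1 := hiii w₁ q₁ w q₂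
      have e2 := hiii w q₁ w₁ q₂
      rw [hPA w₁ q₁ w, hPA w q₂ w₁, symPr_comm U w₁ w] at e1
      rw [hPA w q₁ w₁, hPA w₁ q₂ w] at e2
      have h4 := congrArg (contrL U Q ξ) (e1.trans e2.symm)
      simp only [map_add, map_sub, contrL_tmul, map_smul, map_zero, hξw, hξw₁, smul_eq_mul,
        mul_one, mul_zero, zero_smul, one_smul, smul_smul, smul_zero, add_zero, sub_zero,
        zero_sub, zero_add] at h4
      rw [sub_eq_sub_iff_add_eq_add] at h4
      exact h4.symm
  -- reduced form of condition (iii)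
  have hIII : ∀ (w₁ w₂ : U) (q₁ q₂ : Q),
      w₂ ⊗ₜ[ℂ] ((φ₁ (w₁ ⊗ₜ[ℂ] q₁)).2 q₂ - σ q₂ w₁ • q₁)
        + w₁ ⊗ₜ[ℂ] ((φ₁ (w₂ ⊗ₜ[ℂ] q₁)).2 q₂ - σ q₂ w₂ • q₁)
        = φ₂ (ω q₁ q₂ • symPr U w₁ w₂) := by
    intro w₁ w₂ q₁ q₂
    have h2 := hiii w₁ q₁ w₂ q₂
    rw [hPA w₁ q₁ w₂, hPA w₂ q₂ w₁] at h2
    have hCsub : (φ₁ (w₂ ⊗ₜ[ℂ] q₂)).2 q₁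
        = σ q₁ w₂ • q₂ + σ q₂ w₂ • q₁ - (φ₁ (w₂ ⊗ₜ[ℂ] q₁)).2 q₂ := by
      rw [← hF2 w₂ q₁ q₂]
      abel
    rw [hCsub] at h2
    rw [← h2]
    simp only [TensorProduct.tmul_sub, TensorProduct.tmul_add, TensorProduct.tmul_smul,
      ← TensorProduct.smul_tmul']
    module
  -- rank-one structure of the off-diagonal part
  have hE1 : ∀ (w : U) (q₁ q₂ : Q),
      (φ₁ (w ⊗ₜ[ℂ] q₁)).2 q₂ - σ q₂ w • q₁
        = ω q₁ q₂ • ((φ₁ (w ⊗ₜ[ℂ] p₀)).2 q₀ - σ q₀ w • p₀) := by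
    intro w q₁ q₂
    rcases eq_or_ne w 0 with rfl | hw
    · rw [TensorProduct.zero_tmul, TensorProduct.zero_tmul, map_zero, hσ0w, hσ0w]
      simp
    · obtain ⟨w', hw'⟩ := exists_notmem_span U hU w
      obtain ⟨ξ, hξw, hξw'⟩ := exists_dual_pair U hw'
      have g1 := hIII w w' q₁ q₂
      have g0 := hIII w w' p₀ q₀
      rw [hω₀, one_smul] at g0
      rw [map_smul, ← g0] at g1
      have g2 := congrArg (contrL U Q ξ) g1
      simp only [map_add, contrL_tmul, map_smul, hξw, hξw', one_smul, zero_smul,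
        add_zero, zero_add, smul_add] at g2
      simpa using g2
  -- the linear map h
  obtain ⟨h, hhdef⟩ : ∃ h : U →ₗ[ℂ] Q, ∀ w : U,
      h w = (2:ℂ) • (φ₁ (w ⊗ₜ[ℂ] p₀)).2 q₀ - ((2:ℂ) * σ q₀ w) • p₀ := by
    have hσadd : ∀ w w' : U, σ q₀ (w + w') = σ q₀ w + σ q₀ w' := by
      intro w w'
      simp [hσdef, map_add]
    have hσsmul : ∀ (c : ℂ) (w : U), σ q₀ (c • w) = c * σ q₀ w := by
      intro c w
      simp [hσdef, map_smul]
    refine ⟨{ toFun := fun w => (2:ℂ) • (φ₁ (w ⊗ₜ[ℂ] p₀)).2 q₀ - ((2:ℂ) * σ q₀ w) • p₀,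
              map_add' := ?_, map_smul' := ?_ }, fun w => rfl⟩
    · intro w w'
      have hC : (φ₁ ((w + w') ⊗ₜ[ℂ] p₀)).2 q₀
          = (φ₁ (w ⊗ₜ[ℂ] p₀)).2 q₀ + (φ₁ (w' ⊗ₜ[ℂ] p₀)).2 q₀ := by
        rw [TensorProduct.add_tmul, map_add]
        rfl
      rw [hC, hσadd]
      rw [mul_add]
      module
    · intro c w
      have hC : (φ₁ ((c • w) ⊗ₜ[ℂ] p₀)).2 q₀ = c • (φ₁ (w ⊗ₜ[ℂ] p₀)).2 q₀ := by
        rw [← TensorProduct.smul_tmul', map_smul φ₁ c (w ⊗ₜ[ℂ] p₀)]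
        rfl
      dsimp only [RingHom.id_apply]
      rw [hC, hσsmul]
      rw [mul_left_comm]
      module
  have hEh : ∀ w : U, (φ₁ (w ⊗ₜ[ℂ] p₀)).2 q₀ - σ q₀ w • p₀ = (2⁻¹ : ℂ) • h w := by
    intro w
    rw [hhdef w, smul_sub, smul_smul, smul_smul]
    norm_num
    congr 1
    ring
  -- full form of the 𝔰𝔭(Q)-component
  have hCform : ∀ (w : U) (p q : Q),
      (φ₁ (w ⊗ₜ[ℂ] p)).2 q = σ q w • p + (2⁻¹ * ω p q) • h w := by
    intro w p q
    have hthis := hE1 w p q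
    rw [hEh w] at hthis
    rw [sub_eq_iff_eq_add'] at hthis
    rw [hthis, smul_smul, mul_comm (ω p q) (2⁻¹:ℂ)]
  -- σ is determined by h
  have hσomega : ∀ (w : U) (q : Q), σ q w = 2⁻¹ * ω (h w) q := by
    intro w q
    have key : ∀ p r₁ r₂ : Q,
        (σ r₁ w - 2⁻¹ * ω (h w) r₁) * ω p r₂ = (σ r₂ w - 2⁻¹ * ω (h w) r₂) * ω p r₁ := by
      intro p r₁ r₂
      have hs := hsp (w ⊗ₜ[ℂ] p) r₁ r₂
      rw [hCform w p r₁, hCform w p r₂] at hs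
      simp only [map_add, map_smul, LinearMap.add_apply, LinearMap.smul_apply, smul_eq_mul] at hs
      linear_combination hs
    have k1 : ∀ r : Q, (σ r w - 2⁻¹ * ω (h w) r) = (σ q₀ w - 2⁻¹ * ω (h w) q₀) * ω p₀ r := by
      intro r
      have hk := key p₀ r q₀
      rw [hω₀] at hk
      linear_combination hk
    have k0 : (σ q₀ w - 2⁻¹ * ω (h w) q₀) = 0 := by
      have t := key q₀ p₀ q₀
      rw [halt q₀, hanti p₀ q₀, hω₀] at t
      linear_combination t
    have := k1 q
    rw [k0, zero_mul] at this
    linear_combination this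
  -- conclusion
  refine ⟨h, ?_, ?_, ?_⟩
  · intro v w
    have g := hIII v w p₀ q₀
    rw [hω₀, one_smul, hEh v, hEh w] at g
    rw [← g]
    simp only [TensorProduct.tmul_smul, smul_add]
  · intro w p u
    rw [hPA w p u, hσomega u p]
  · intro w p q
    rw [hCform w p q, hσomega w q]
    simp only [smul_add, smul_smul]

lemma pi1_unique
    (φ₂ : SymSq U →ₗ[ℂ] (U ⊗[ℂ] Q))
    (φ₁ : (U ⊗[ℂ] Q) →ₗ[ℂ] (Module.End ℂ U × Module.End ℂ Q))
    {h h' : U →ₗ[ℂ] Q}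
    (H : IsPi₁ U Q ω h φ₂ φ₁) (H' : IsPi₁ U Q ω h' φ₂ φ₁) : h = h' := by
  ext w
  rcases eq_or_ne w 0 with rfl | hw
  · simp
  obtain ⟨ξ, hξ⟩ := exists_dual_one U hw
  have e := (H.1 w w).symm.trans (H'.1 w w)
  have e2 := congrArg (contrL U Q ξ) e
  simp only [map_smul, map_add, contrL_tmul, hξ, one_smul] at e2
  have e3 := smul_right_injective Q (by norm_num : (2⁻¹:ℂ) ≠ 0) e2
  have e4 : (2:ℂ) • h w = (2:ℂ) • h' w := by
    rw [two_smul, two_smul]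
    exact e3
  exact smul_right_injective Q (by norm_num : (2:ℂ) ≠ 0) e4


/- STATEMENT 11: The first prolongation 𝔤₁ of (𝔤₀, 𝔤₋) is isomorphic to
Hom(U, Q), via the explicit assignment π₁ described above: every
`h ∈ Hom(U,Q)` determines an element of 𝔤₁, and conversely every element of
𝔤₁ arises from a unique `h`. -/
theorem first_prolongation_is_HomUQ
    (hU : 2 ≤ Module.finrank ℂ U)
    (halt : ∀ q : Q, ω q q = 0) (hne : ω ≠ 0)
    (hB : ∀ (u₁ u₂ : U) (q₁ q₂ : Q),
      B (u₁ ⊗ₜ[ℂ] q₁) (u₂ ⊗ₜ[ℂ] q₂) = ω q₁ q₂ • symPr U u₁ u₂) :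
    (∀ h : U →ₗ[ℂ] Q,
      ∃ (φ₂ : SymSq U →ₗ[ℂ] (U ⊗[ℂ] Q))
        (φ₁ : (U ⊗[ℂ] Q) →ₗ[ℂ] (Module.End ℂ U × Module.End ℂ Q)),
        InProlong₁ U Q ω B φ₂ φ₁ ∧ IsPi₁ U Q ω h φ₂ φ₁) ∧
    (∀ (φ₂ : SymSq U →ₗ[ℂ] (U ⊗[ℂ] Q))
        (φ₁ : (U ⊗[ℂ] Q) →ₗ[ℂ] (Module.End ℂ U × Module.End ℂ Q)),
      InProlong₁ U Q ω B φ₂ φ₁ → ∃! h : U →ₗ[ℂ] Q, IsPi₁ U Q ω h φ₂ φ₁) := by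
  constructor
  · intro h
    exact ⟨pi2of h, pi1of ω h, main_forward U Q ω B halt hB h⟩
  · intro φ₂ φ₁ hP
    obtain ⟨h, hIs⟩ := main_converse U Q ω B hU halt hne hB φ₂ φ₁ hP
    exact ⟨h, hIs, fun h' hIs' => pi1_unique U Q ω φ₂ φ₁ hIs' hIs⟩
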